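/- arXiv:2305.16446 — 4 statements merged into one kernel-verified Lean document; each statement's English description precedes it below -/
import Mathlib

section
/- Let ρ and σ be n×n real symmetric positive semidefinite matrices with trace 1. Then the quantum Jensen–Shannon divergence is bounded below by one eighth of the squared trace norm of their difference: S((ρ+σ)/2) − (1/2)(S(ρ) + S(σ)) ≥ (1/8)·(∑ᵢ |μᵢ|)², where μ₁,…,μₙ are the eigenvalues of the symmetric matrix ρ − σ (so ∑ᵢ |μᵢ| is the trace/nuclear norm of ρ − σ). -/
open Matrix

/-- The von Neumann entropy `S(M) = -∑ᵢ λᵢ log λᵢ` of a Hermitian (symmetric) real matrix,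
defined as `0` on non-Hermitian matrices. -/
noncomputable def vonNeumannEntropy {n : Type*} [Fintype n] [DecidableEq n]
    (M : Matrix n n ℝ) : ℝ :=
  if hM : M.IsHermitian then -∑ i, hM.eigenvalues i * Real.log (hM.eigenvalues i) else 0

/-!
The divergence is the average of the relative entropies `D(ρ ‖ m)` and `D(σ ‖ m)` to the
midpoint `m = (ρ + σ) / 2`, and `‖ρ - m‖₁ = ‖σ - m‖₁ = ‖ρ - σ‖₁ / 2`, so it suffices to prove
the quantum Pinsker inequality `tr((B - C) G)² ≤ 2 D(B ‖ C)` for every orthogonal `G` (the trace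
norm is attained at `G = sign (ρ - σ)`).

Write `B = P diag(b) Pᵀ`, `C = W diag(l) Wᵀ` and put `M = PᵀW`, `N = WᵀGP`. Both are
orthogonal, so `Mᵢₖ²` and `Nₖᵢ²` are doubly stochastic, and
`tr((B - C) G) = ∑ (bᵢ - lₖ) Mᵢₖ Nₖᵢ`, `D(B ‖ C) = ∑ Mᵢₖ² bᵢ (log bᵢ - log lₖ)`.
Cauchy–Schwarz with the weights `wᵢₖ = (2 bᵢ + 4 lₖ) / 3`, whose `N²`-average is `2`, together
with the refinement `3 (x - y)² / (2x + 4y) ≤ x log (x / y) - x + y` of Pinsker's inequality,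
gives the claim.
-/

open Real Set InformationTheory

lemma isMinOn_Ioi_one_of_hasDerivAt {f f' : ℝ → ℝ}
    (hf : ∀ t, 0 < t → HasDerivAt f (f' t) t) (hf' : ∀ t, 0 < t → 0 ≤ (t - 1) * f' t) :
    IsMinOn f (Ioi 0) 1 := by
  intro t (ht : 0 < t)
  have hcont : ContinuousOn f (Ioi 0) := fun s hs => (hf s hs).continuousAt.continuousWithinAt
  rcases le_total 1 t with h1 | h1
  · refine monotoneOn_of_hasDerivWithinAt_nonneg (convex_Ici 1)
      (hcont.mono fun s (hs : 1 ≤ s) => zero_lt_one.trans_le hs)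
      (fun s hs => (hf s ?_).hasDerivWithinAt) (fun s hs => ?_) (mem_Ici.2 le_rfl) h1 h1
    all_goals rw [interior_Ici] at hs
    · exact zero_lt_one.trans hs
    · exact nonneg_of_mul_nonneg_right (hf' s (zero_lt_one.trans hs)) (sub_pos.2 hs)
  · refine antitoneOn_of_hasDerivWithinAt_nonpos (convex_Ioc 0 1) (hcont.mono Ioc_subset_Ioi_self)
      (fun s hs => (hf s ?_).hasDerivWithinAt) (fun s hs => ?_) ⟨ht, h1⟩ ⟨one_pos, le_rfl⟩
      h1
    all_goals rw [interior_Ioc] at hs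
    · exact hs.1
    · exact nonpos_of_mul_nonneg_right (hf' s hs.1) (sub_neg.2 hs.2)

lemma sub_one_mul_add_one_mul_log_sub_nonneg {t : ℝ} (ht : 0 < t) :
    0 ≤ (t - 1) * ((t + 1) * log t - 2 * (t - 1)) := by
  have hmono : MonotoneOn (fun s => (s + 1) * log s - 2 * (s - 1)) (Ioi 0) := by
    have hderiv : ∀ s ∈ Ioi (0 : ℝ), HasDerivAt (fun s => (s + 1) * log s - 2 * (s - 1))
        (log s + (s + 1) * s⁻¹ - 2) s := fun s (hs : 0 < s) => by
      refine (((hasDerivAt_id' s).add_const 1).mul (hasDerivAt_log hs.ne')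
        |>.sub (((hasDerivAt_id' s).sub_const 1).const_mul 2)).congr_deriv ?_
      ring
    refine monotoneOn_of_hasDerivWithinAt_nonneg (convex_Ioi 0)
      (fun s hs => (hderiv s hs).continuousAt.continuousWithinAt)
      (fun s hs => (hderiv s (interior_subset hs)).hasDerivWithinAt) (fun s hs => ?_)
    rw [interior_Ioi] at hs
    have := one_sub_inv_le_log_of_pos hs
    have : (s + 1) * s⁻¹ = 1 + s⁻¹ := by rw [add_mul, mul_inv_cancel₀ hs.ne', one_mul]
    linarith
  have h1 : (1 + 1) * log 1 - 2 * (1 - 1) = (0 : ℝ) := by simp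
  rcases le_total 1 t with h | h
  · exact mul_nonneg (sub_nonneg.2 h) (h1 ▸ hmono (mem_Ioi.2 one_pos) ht h)
  · exact mul_nonneg_of_nonpos_of_nonpos (sub_nonpos.2 h) (h1 ▸ hmono ht (mem_Ioi.2 one_pos) h)

lemma three_mul_sq_sub_one_le_mul_klFun {t : ℝ} (ht : 0 ≤ t) :
    3 * (t - 1) ^ 2 ≤ (2 * t + 4) * klFun t := by
  rcases ht.eq_or_lt with rfl | ht
  · norm_num [klFun_zero]
  have hderiv (s : ℝ) (hs : 0 < s) :
      HasDerivAt (fun s => (2 * s + 4) * klFun s - 3 * (s - 1) ^ 2)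
        (4 * ((s + 1) * log s - 2 * (s - 1))) s := by
    refine ((((hasDerivAt_id' s).const_mul 2).add_const 4).mul (hasDerivAt_klFun hs.ne')
      |>.sub (((hasDerivAt_id' s).sub_const 1).pow 2 |>.const_mul 3)).congr_deriv ?_
    simp only [klFun]
    ring
  have hmin := isMinOn_Ioi_one_of_hasDerivAt hderiv
    (fun s hs => by nlinarith [sub_one_mul_add_one_mul_log_sub_nonneg hs]) (mem_Ioi.2 ht)
  simp only [klFun_one, mem_ofPred_eq] at hmin
  linarith

lemma three_mul_sq_sub_div_le {x y : ℝ} (hx : 0 ≤ x) (hy : 0 ≤ y) (hxy : y = 0 → x = 0) :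
    3 * (x - y) ^ 2 / (2 * x + 4 * y) ≤ x * (log x - log y) - x + y := by
  rcases hy.eq_or_lt with rfl | hy
  · simp [hxy rfl]
  have key := mul_le_mul_of_nonneg_left (three_mul_sq_sub_one_le_mul_klFun (div_nonneg hx hy.le))
    (sq_nonneg y)
  have hklFun : y * klFun (x / y) = x * (log x - log y) - x + y := by
    rcases hx.eq_or_lt with rfl | hx
    · simp [klFun]
    · rw [klFun, log_div hx.ne' hy.ne']
      field_simp
      ring
  rw [div_le_iff₀ (by positivity), ← hklFun]
  calc 3 * (x - y) ^ 2 = y ^ 2 * (3 * (x / y - 1) ^ 2) := by field_simp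
    _ ≤ y ^ 2 * ((2 * (x / y) + 4) * klFun (x / y)) := key
    _ = y * klFun (x / y) * (2 * x + 4 * y) := by field_simp

variable {ι : Type*} [Fintype ι] [DecidableEq ι]

namespace Matrix.orthogonalGroup

variable {M : Matrix ι ι ℝ} (hM : M ∈ orthogonalGroup ι ℝ)
include hM

lemma sum_sum_apply_sq_mul_left (f : ι → ℝ) : ∑ i, ∑ k, M i k ^ 2 * f i = ∑ i, f i := by
  have hrow (i : ι) : ∑ k, M i k ^ 2 = 1 := by
    simpa [mul_apply, sq, one_apply] using congrFun₂ ((mem_orthogonalGroup_iff ι ℝ).1 hM) i i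
  simp [← Finset.sum_mul, hrow]

lemma sum_sum_apply_sq_mul_right (f : ι → ℝ) : ∑ i, ∑ k, M i k ^ 2 * f k = ∑ k, f k := by
  have hcol (k : ι) : ∑ i, M i k ^ 2 = 1 := by
    simpa [mul_apply, sq, one_apply] using congrFun₂ ((mem_orthogonalGroup_iff' ι ℝ).1 hM) k k
  rw [Finset.sum_comm]
  simp [← Finset.sum_mul, hcol]

end Matrix.orthogonalGroup

theorem sq_sum_sub_mul_mul_le_two_mul_sum_sq_mul_log_sub {b l : ι → ℝ} (hb : ∀ i, 0 ≤ b i)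
    (hl : ∀ k, 0 ≤ l k) (hb1 : ∑ i, b i = 1) (hl1 : ∑ k, l k = 1) {M N : Matrix ι ι ℝ}
    (hM : M ∈ orthogonalGroup ι ℝ) (hN : N ∈ orthogonalGroup ι ℝ)
    (hsupp : ∀ i k, l k = 0 → b i * M i k ^ 2 = 0) :
    (∑ i, ∑ k, (b i - l k) * M i k * N k i) ^ 2 ≤
      2 * ∑ i, ∑ k, M i k ^ 2 * (b i * (log (b i) - log (l k))) := by
  set w : ι → ι → ℝ := fun i k => 2 * b i + 4 * l k with hw
  have hw0 (i k : ι) : 0 ≤ w i k := by have := hb i; have := hl k; positivity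
  have hCS : (∑ i, ∑ k, (b i - l k) * M i k * N k i) ^ 2 ≤
      (∑ i, ∑ k, M i k ^ 2 * (3 * (b i - l k) ^ 2 / w i k)) *
        ∑ i, ∑ k, N k i ^ 2 * (w i k / 3) := by
    simp only [← Fintype.sum_prod_type']
    refine Finset.sum_sq_le_sum_mul_sum_of_sq_le_mul _ (fun ik _ => ?_) (fun ik _ => ?_)
      (fun ik _ => ?_)
    · have := hw0 ik.1 ik.2; positivity
    · have := hw0 ik.1 ik.2; positivity
    · rcases (hw0 ik.1 ik.2).eq_or_lt with h | h
      · have : b ik.1 = l ik.2 := by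
          have := hb ik.1; have := hl ik.2; simp only [hw] at h; linarith
        simp [this]
      · apply le_of_eq
        field_simp
  have hNw : ∑ i, ∑ k, N k i ^ 2 * (w i k / 3) = 2 := by
    have hsplit (i k : ι) :
        N k i ^ 2 * (w i k / 3) = 2 / 3 * (N k i ^ 2 * b i) + 4 / 3 * (N k i ^ 2 * l k) := by
      ring
    simp only [hsplit, Finset.sum_add_distrib, ← Finset.mul_sum]
    rw [Finset.sum_comm, orthogonalGroup.sum_sum_apply_sq_mul_right hN b,
      Finset.sum_comm (f := fun i k => N k i ^ 2 * l k),
      orthogonalGroup.sum_sum_apply_sq_mul_left hN l, hb1, hl1]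
    norm_num
  have hpt (i k : ι) : M i k ^ 2 * (3 * (b i - l k) ^ 2 / w i k) ≤
      M i k ^ 2 * (b i * (log (b i) - log (l k)) - b i + l k) := by
    rcases eq_or_ne (M i k) 0 with h | h
    · simp [h]
    refine mul_le_mul_of_nonneg_left (three_mul_sq_sub_div_le (hb i) (hl k) fun hlk => ?_)
      (sq_nonneg _)
    simpa [h] using hsupp i k hlk
  calc _ ≤ _ := hCS
    _ ≤ (∑ i, ∑ k, M i k ^ 2 * (b i * (log (b i) - log (l k)) - b i + l k)) * 2 := by
      rw [hNw]
      exact mul_le_mul_of_nonneg_right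
        (Finset.sum_le_sum fun i _ => Finset.sum_le_sum fun k _ => hpt i k) zero_le_two
    _ = _ := by
      simp only [mul_add, mul_sub, Finset.sum_add_distrib, Finset.sum_sub_distrib,
        orthogonalGroup.sum_sum_apply_sq_mul_left hM b,
        orthogonalGroup.sum_sum_apply_sq_mul_right hM l, hb1, hl1]
      ring

namespace Matrix.IsHermitian

variable {A : Matrix ι ι ℝ} (hA : A.IsHermitian)
include hA

lemma cfc_eq_conj (f : ℝ → ℝ) :
    cfc f A = (hA.eigenvectorUnitary : Matrix ι ι ℝ) * diagonal (f ∘ hA.eigenvalues) *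
      star (hA.eigenvectorUnitary : Matrix ι ι ℝ) := by
  rw [hA.cfc_eq, IsHermitian.cfc, Unitary.conjStarAlgAut_apply]
  rfl

lemma eq_conj_diagonal :
    A = (hA.eigenvectorUnitary : Matrix ι ι ℝ) * diagonal hA.eigenvalues *
      star (hA.eigenvectorUnitary : Matrix ι ι ℝ) := by
  conv_lhs => rw [← cfc_id' ℝ A, hA.cfc_eq_conj]
  rfl

lemma trace_cfc (f : ℝ → ℝ) : (cfc f A).trace = ∑ i, f (hA.eigenvalues i) := by
  rw [hA.cfc_eq_conj, trace_mul_cycle, Unitary.coe_star_mul_self, one_mul, trace_diagonal]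
  rfl

lemma trace_mul_cfc (f : ℝ → ℝ) :
    (A * cfc f A).trace = ∑ i, hA.eigenvalues i * f (hA.eigenvalues i) := by
  rw [← hA.trace_cfc (fun x => x * f x), cfc_mul _ _ _ (A.finite_real_spectrum.continuousOn _)
    (A.finite_real_spectrum.continuousOn _), cfc_id' ℝ A]

lemma vonNeumannEntropy_eq_neg_trace : vonNeumannEntropy A = -(A * cfc log A).trace := by
  rw [vonNeumannEntropy, dif_pos hA, hA.trace_mul_cfc]

theorem exists_trace_mul_eq_sum_abs_eigenvalues :
    ∃ G : orthogonalGroup ι ℝ, (A * G).trace = ∑ i, |hA.eigenvalues i| := by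
  set s : ℝ → ℝ := fun x => if 0 ≤ x then 1 else -1
  have hsym : star (cfc s A) = cfc s A := (cfc_predicate s A).star_eq
  have hsq : cfc s A * cfc s A = 1 := by
    have hs : (fun x => s x * s x) = 1 := funext fun x => by dsimp only [s]; split_ifs <;> norm_num
    rw [← cfc_mul _ _ _ (A.finite_real_spectrum.continuousOn _)
      (A.finite_real_spectrum.continuousOn _), hs, cfc_one ℝ A]
  refine ⟨⟨cfc s A, (mem_unitaryGroup_iff).2 (by rw [hsym, hsq])⟩, ?_⟩
  rw [hA.trace_mul_cfc]
  refine Finset.sum_congr rfl fun i _ => ?_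
  simp only [s]
  split_ifs with h
  · rw [mul_one, abs_of_nonneg h]
  · rw [mul_neg_one, abs_of_neg (not_le.1 h)]

end Matrix.IsHermitian

namespace Matrix

omit [DecidableEq ι] in
lemma col_dotProduct_mulVec_col (A W : Matrix ι ι ℝ) (k : ι) :
    W.col k ⬝ᵥ (A *ᵥ W.col k) = (star W * A * W) k k := by
  simp only [dotProduct, mulVec, mul_apply, col_apply, star_apply, star_trivial, Finset.mul_sum,
    Finset.sum_mul]
  rw [Finset.sum_comm]
  exact Finset.sum_congr rfl fun _ _ => Finset.sum_congr rfl fun _ _ => by ring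

lemma trace_conj_diagonal_mul (U : Matrix ι ι ℝ) (d : ι → ℝ) (X : Matrix ι ι ℝ) :
    (U * diagonal d * star U * X).trace = ∑ i, d i * (star U * X * U) i i := by
  rw [Matrix.mul_assoc, Matrix.mul_assoc, trace_mul_comm, Matrix.mul_assoc]
  simp [trace, diagonal_mul]

lemma conj_diagonal_apply_self (M : Matrix ι ι ℝ) (d : ι → ℝ) (i : ι) :
    (M * diagonal d * star M) i i = ∑ k, d k * M i k ^ 2 := by
  rw [mul_apply]
  simp only [mul_diagonal, star_apply, star_trivial]
  exact Finset.sum_congr rfl fun k _ => by ring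

lemma conj_conj_diagonal_apply_self (U V : Matrix ι ι ℝ) (d : ι → ℝ) (k : ι) :
    (star U * (V * diagonal d * star V) * U) k k = ∑ i, d i * (star U * V) k i ^ 2 := by
  rw [show star U * (V * diagonal d * star V) * U = star U * V * diagonal d * star (star U * V) by
    simp [star_mul, Matrix.mul_assoc], conj_diagonal_apply_self]

omit [DecidableEq ι] in
lemma star_mul_apply_comm (U V : Matrix ι ι ℝ) (i k : ι) :
    (star U * V) i k = (star V * U) k i := by
  rw [show star U * V = star (star V * U) by simp [star_mul], star_apply, star_trivial]

lemma trace_conj_diagonal_mul_conj_diagonal (P W : Matrix ι ι ℝ) (b e : ι → ℝ) :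
    (P * diagonal b * star P * (W * diagonal e * star W)).trace =
      ∑ i, ∑ k, (star P * W) i k ^ 2 * (b i * e k) := by
  simp only [trace_conj_diagonal_mul, conj_conj_diagonal_apply_self, Finset.mul_sum]
  exact Finset.sum_congr rfl fun _ _ => Finset.sum_congr rfl fun _ _ => by ring

lemma trace_sub_mul_eq_sum {P W : Matrix ι ι ℝ} (hP : P ∈ unitaryGroup ι ℝ)
    (hW : W ∈ unitaryGroup ι ℝ) (b l : ι → ℝ) (X : Matrix ι ι ℝ) :
    ((P * diagonal b * star P - W * diagonal l * star W) * X).trace =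
      ∑ i, ∑ k, (b i - l k) * (star P * W) i k * (star W * X * P) k i := by
  have hPXP : star P * X * P = star P * W * (star W * X * P) := by
    simp only [← Matrix.mul_assoc]
    rw [Matrix.mul_assoc (star P) W, Unitary.mul_star_self_of_mem hW, Matrix.mul_one]
  have hWXW : star W * X * W = star W * X * P * (star P * W) := by
    simp only [Matrix.mul_assoc]
    rw [← Matrix.mul_assoc P, Unitary.mul_star_self_of_mem hP, Matrix.one_mul]
  rw [Matrix.sub_mul, trace_sub, trace_conj_diagonal_mul, trace_conj_diagonal_mul, hPXP, hWXW]
  generalize star P * W = M, star W * X * P = N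
  simp only [mul_apply, Finset.mul_sum, sub_mul, Finset.sum_sub_distrib]
  congr 1
  · exact Finset.sum_congr rfl fun _ _ => Finset.sum_congr rfl fun _ _ => by ring
  · rw [Finset.sum_comm]
    exact Finset.sum_congr rfl fun _ _ => Finset.sum_congr rfl fun _ _ => by ring

lemma mul_star_mul_apply_sq_eq_zero {P W : Matrix ι ι ℝ} (hW : W ∈ unitaryGroup ι ℝ)
    {b l : ι → ℝ} (hb : ∀ i, 0 ≤ b i)
    (hsupp : ∀ v, v ⬝ᵥ ((W * diagonal l * star W) *ᵥ v) = 0 →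
      v ⬝ᵥ ((P * diagonal b * star P) *ᵥ v) = 0)
    {k : ι} (hk : l k = 0) (i : ι) : b i * (star P * W) i k ^ 2 = 0 := by
  have hWk : W.col k ⬝ᵥ ((W * diagonal l * star W) *ᵥ W.col k) = 0 := by
    rw [col_dotProduct_mulVec_col, conj_conj_diagonal_apply_self, Unitary.star_mul_self_of_mem hW]
    simp [one_apply, hk]
  have hPk := hsupp _ hWk
  rw [col_dotProduct_mulVec_col, conj_conj_diagonal_apply_self,
    Finset.sum_eq_zero_iff_of_nonneg fun j _ => mul_nonneg (hb j) (sq_nonneg _)] at hPk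
  rw [star_mul_apply_comm]
  exact hPk i (Finset.mem_univ i)

end Matrix

/-- Umegaki's relative entropy `tr B (log B - log C)`. Since `Real.log 0 = 0`, it is finite
even when the support of `B` is not contained in that of `C`, where it should be `+∞`. -/
noncomputable def relEntropy (B C : Matrix ι ι ℝ) : ℝ :=
  (B * cfc log B).trace - (B * cfc log C).trace

lemma vonNeumannEntropy_midpoint_sub_eq {ρ σ : Matrix ι ι ℝ} (hρ : ρ.IsHermitian)
    (hσ : σ.IsHermitian) :
    vonNeumannEntropy ((1 / 2 : ℝ) • (ρ + σ))
        - (1 / 2) * (vonNeumannEntropy ρ + vonNeumannEntropy σ) =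
      (relEntropy ρ ((1 / 2 : ℝ) • (ρ + σ))
        + relEntropy σ ((1 / 2 : ℝ) • (ρ + σ))) / 2 := by
  have hm : ((1 / 2 : ℝ) • (ρ + σ)).IsHermitian := (hρ.add hσ).smul (IsSelfAdjoint.all _)
  rw [hm.vonNeumannEntropy_eq_neg_trace, hρ.vonNeumannEntropy_eq_neg_trace,
    hσ.vonNeumannEntropy_eq_neg_trace, relEntropy, relEntropy, Matrix.smul_mul, Matrix.add_mul,
    trace_smul, trace_add, smul_eq_mul]
  ring

theorem sq_trace_sub_mul_le_two_mul_relEntropy {B C : Matrix ι ι ℝ} (hB : B.PosSemidef)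
    (hC : C.PosSemidef) (hB1 : B.trace = 1) (hC1 : C.trace = 1)
    (hBC : ∀ v, v ⬝ᵥ (C *ᵥ v) = 0 → v ⬝ᵥ (B *ᵥ v) = 0) (G : orthogonalGroup ι ℝ) :
    ((B - C) * G).trace ^ 2 ≤ 2 * relEntropy B C := by
  set P : Matrix ι ι ℝ := ↑hB.1.eigenvectorUnitary
  set W : Matrix ι ι ℝ := ↑hC.1.eigenvectorUnitary
  have hP : P ∈ unitaryGroup ι ℝ := hB.1.eigenvectorUnitary.2
  have hW : W ∈ unitaryGroup ι ℝ := hC.1.eigenvectorUnitary.2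
  set b := hB.1.eigenvalues
  set l := hC.1.eigenvalues
  have hB' : B = P * diagonal b * star P := hB.1.eq_conj_diagonal
  have hC' : C = W * diagonal l * star W := hC.1.eq_conj_diagonal
  have hb1 : ∑ i, b i = 1 := by simpa [hB1] using hB.1.trace_eq_sum_eigenvalues.symm
  have hl1 : ∑ k, l k = 1 := by simpa [hC1] using hC.1.trace_eq_sum_eigenvalues.symm
  have hM : star P * W ∈ orthogonalGroup ι ℝ := mul_mem (Unitary.star_mem hP) hW
  have hN : star W * G * P ∈ orthogonalGroup ι ℝ :=
    mul_mem (mul_mem (Unitary.star_mem hW) G.2) hP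
  have hsupp (i k : ι) (hk : l k = 0) : b i * (star P * W) i k ^ 2 = 0 :=
    mul_star_mul_apply_sq_eq_zero hW hB.eigenvalues_nonneg (hB' ▸ hC' ▸ hBC) hk i
  have hcross : (B * cfc log C).trace = ∑ i, ∑ k, (star P * W) i k ^ 2 * (b i * log (l k)) := by
    rw [hB', hC.1.cfc_eq_conj, trace_conj_diagonal_mul_conj_diagonal]
    rfl
  have hrel : relEntropy B C =
      ∑ i, ∑ k, (star P * W) i k ^ 2 * (b i * (log (b i) - log (l k))) := by
    rw [relEntropy, hB.1.trace_mul_cfc, hcross,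
      ← orthogonalGroup.sum_sum_apply_sq_mul_left hM (fun i => b i * log (b i))]
    simp only [← Finset.sum_sub_distrib, ← mul_sub]
  have htr := trace_sub_mul_eq_sum hP hW b l G
  rw [← hB', ← hC'] at htr
  rw [htr, hrel]
  exact sq_sum_sub_mul_mul_le_two_mul_sum_sq_mul_log_sub hB.eigenvalues_nonneg
    hC.eigenvalues_nonneg hb1 hl1 hM hN hsupp

omit [DecidableEq ι] in
lemma dotProduct_mulVec_eq_zero_of_midpoint {A B : Matrix ι ι ℝ} (hA : A.PosSemidef)
    (hB : B.PosSemidef) (v : ι → ℝ) (h : v ⬝ᵥ (((1 / 2 : ℝ) • (A + B)) *ᵥ v) = 0) :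
    v ⬝ᵥ (A *ᵥ v) = 0 := by
  have hA0 := hA.dotProduct_mulVec_nonneg v
  have hB0 := hB.dotProduct_mulVec_nonneg v
  simp only [star_trivial] at hA0 hB0
  rw [smul_mulVec, add_mulVec, dotProduct_smul, dotProduct_add, smul_eq_mul] at h
  linarith

/-- The quantum Jensen-Shannon divergence is bounded below by one eighth of the squared
trace (nuclear) norm of the difference of the density matrices. -/
theorem qjsd_ge_traceNorm_sq {n : ℕ} {ρ σ : Matrix (Fin n) (Fin n) ℝ}
    (hρ : ρ.PosSemidef) (hσ : σ.PosSemidef) (hρ1 : ρ.trace = 1) (hσ1 : σ.trace = 1) :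
    vonNeumannEntropy ((1 / 2 : ℝ) • (ρ + σ))
        - (1 / 2) * (vonNeumannEntropy ρ + vonNeumannEntropy σ) ≥
      (1 / 8) * (∑ i, |(hρ.1.sub hσ.1).eigenvalues i|) ^ 2 := by
  set m := (1 / 2 : ℝ) • (ρ + σ)
  have hm : m.PosSemidef := (hρ.add hσ).smul (by norm_num)
  have hm1 : m.trace = 1 := by rw [trace_smul, trace_add, hρ1, hσ1]; norm_num
  obtain ⟨G, hG⟩ := (hρ.1.sub hσ.1).exists_trace_mul_eq_sum_abs_eigenvalues
  set T := ∑ i, |(hρ.1.sub hσ.1).eigenvalues i|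
  have hρG : ((ρ - m) * G).trace = T / 2 := by
    rw [show ρ - m = (1 / 2 : ℝ) • (ρ - σ) by module, Matrix.smul_mul, trace_smul, hG,
      smul_eq_mul]
    ring
  have hσG : ((σ - m) * G).trace = -(T / 2) := by
    rw [show σ - m = (-(1 / 2) : ℝ) • (ρ - σ) by module, Matrix.smul_mul, trace_smul, hG,
      smul_eq_mul]
    ring
  have hρm := sq_trace_sub_mul_le_two_mul_relEntropy hρ hm hρ1 hm1
    (dotProduct_mulVec_eq_zero_of_midpoint hρ hσ) G
  have hσm := sq_trace_sub_mul_le_two_mul_relEntropy hσ hm hσ1 hm1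
    (fun v hv => dotProduct_mulVec_eq_zero_of_midpoint hσ hρ v (by rwa [add_comm])) G
  rw [hρG] at hρm
  rw [hσG, neg_sq] at hσm
  rw [vonNeumannEntropy_midpoint_sub_eq hρ.1 hσ.1]
  linarith
end

section
/- Let N ≥ 1 and let K_Z be a 2N×2N real symmetric positive semidefinite matrix all of whose diagonal entries equal 1/(2N). Let A and B denote the top-left and bottom-right N×N diagonal blocks of K_Z, and set K_X = 2·A and K_Y = 2·B (each real symmetric positive semidefinite with trace 1). Let K_L be the 2N×2N matrix with (K_L)ᵢⱼ = 1/(2N) if i and j both lie in {1,…,N} or both lie in {N+1,…,2N}, and (K_L)ᵢⱼ = 0 otherwise. Then the representation Jensen–Shannon divergence equals the matrix-based mutual information between the mixture and the labels: S(K_Z) − (1/2)(S(K_X) + S(K_Y)) = S(K_Z) + S(K_L) − S((K_Z ⊙ K_L) / Tr(K_Z ⊙ K_L)), where ⊙ denotes the Hadamard (entrywise) product and Tr(K_Z ⊙ K_L) = 1/(2N) > 0. -/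
open Matrix
open scoped Matrix

/-!
Multiplying `K_Z` entrywise by the label kernel `K_L` kills the off-diagonal blocks, so the
normalised Hadamard product is `diag(A, B)`. The entropy is additive on block-diagonal matrices
and satisfies `S(c • M) = c S(M) - c log c Tr M`; as `Tr A = Tr B = 1/2` this gives
`S(A) + S(B) = (S(K_X) + S(K_Y))/2 + log 2`. Finally `K_L` is `1/2` times a block diagonal of
two rank-one projections, so `S(K_L) = log 2` and the two `log 2` terms cancel.
-/

open Real

section Entropy

variable {n m : Type*} [Fintype n] [DecidableEq n] [Fintype m] [DecidableEq m]

theorem vonNeumannEntropy_eq_sum_negMulLog {M : Matrix n n ℝ} (hM : M.IsHermitian) :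
    vonNeumannEntropy M = ∑ i, negMulLog (hM.eigenvalues i) := by
  simp only [vonNeumannEntropy, dif_pos hM, negMulLog, neg_mul, Finset.sum_neg_distrib]

theorem vonNeumannEntropy_eq_sum_roots_charpoly {M : Matrix n n ℝ} (hM : M.IsHermitian) :
    vonNeumannEntropy M = (M.charpoly.roots.map negMulLog).sum := by
  rw [vonNeumannEntropy_eq_sum_negMulLog hM, hM.roots_charpoly_eq_eigenvalues, Multiset.map_map]
  rfl

theorem vonNeumannEntropy_fromBlocks_zero {A : Matrix n n ℝ} {B : Matrix m m ℝ}
    (hA : A.IsHermitian) (hB : B.IsHermitian) :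
    vonNeumannEntropy (fromBlocks A 0 0 B) = vonNeumannEntropy A + vonNeumannEntropy B := by
  have hAB : (fromBlocks A 0 0 B).IsHermitian :=
    isHermitian_fromBlocks_iff.mpr ⟨hA, by simp, by simp, hB⟩
  rw [vonNeumannEntropy_eq_sum_roots_charpoly hAB, vonNeumannEntropy_eq_sum_roots_charpoly hA,
    vonNeumannEntropy_eq_sum_roots_charpoly hB, charpoly_fromBlocks_zero₁₂,
    Polynomial.roots_mul (mul_ne_zero A.charpoly_monic.ne_zero B.charpoly_monic.ne_zero),
    Multiset.map_add, Multiset.sum_add]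

theorem vonNeumannEntropy_cfc {M : Matrix n n ℝ} (hM : M.IsHermitian) (f : ℝ → ℝ) :
    vonNeumannEntropy (cfc f M) = ∑ i, negMulLog (f (hM.eigenvalues i)) := by
  have hf : (cfc f M).IsHermitian := isHermitian_iff_isSelfAdjoint.mpr (cfc_predicate f M)
  rw [vonNeumannEntropy_eq_sum_roots_charpoly hf, hM.charpoly_cfc_eq,
    Polynomial.roots_prod _ _ (Finset.prod_ne_zero_iff.mpr fun i _ => Polynomial.X_sub_C_ne_zero _)]
  simp [Multiset.bind]

theorem vonNeumannEntropy_smul {M : Matrix n n ℝ} (hM : M.IsHermitian) (c : ℝ) :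
    vonNeumannEntropy (c • M) = c * vonNeumannEntropy M + negMulLog c * M.trace := by
  rw [← cfc_const_mul_id c M hM.isSelfAdjoint, vonNeumannEntropy_cfc hM,
    vonNeumannEntropy_eq_sum_negMulLog hM, hM.trace_eq_sum_eigenvalues]
  simp only [negMulLog_mul, Finset.sum_add_distrib, ← Finset.mul_sum, ← Finset.sum_mul,
    RCLike.ofReal_real_eq_id, id_eq]
  ring

theorem vonNeumannEntropy_eq_zero_of_isIdempotentElem {M : Matrix n n ℝ} (hM : M.IsHermitian)
    (hP : IsIdempotentElem M) : vonNeumannEntropy M = 0 := by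
  rw [vonNeumannEntropy_eq_sum_negMulLog hM]
  refine Finset.sum_eq_zero fun i _ => ?_
  rcases hP.spectrum_subset ℝ (hM.eigenvalues_mem_spectrum_real i) with h | h <;>
    simp [Set.mem_singleton_iff.mp h]

end Entropy

section LabelKernel

variable {l m n K : Type*} [Fintype n] [Nonempty n] [Field K] [CharZero K]

theorem isIdempotentElem_of_const_inv_card :
    IsIdempotentElem (of fun _ _ : n => (Fintype.card n : K)⁻¹) := by
  ext i j
  simp [mul_apply]

theorem trace_of_const_inv_card : trace (of fun _ _ : n => (Fintype.card n : K)⁻¹) = 1 := by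
  simp [trace]

theorem trace_fromBlocks {R : Type*} [AddCommMonoid R] [Fintype l] [Fintype m]
    (A : Matrix l l R) (B : Matrix l m R) (C : Matrix m l R) (D : Matrix m m R) :
    (fromBlocks A B C D).trace = A.trace + D.trace := by
  simp [trace, Fintype.sum_sum_type]

theorem hadamard_ite_isLeft_eq {R : Type*} [CommSemiring R] (M : Matrix (l ⊕ m) (l ⊕ m) R)
    (c : R) :
    M ⊙ of (fun i j => if i.isLeft = j.isLeft then c else 0) =
      c • fromBlocks M.toBlocks₁₁ 0 0 M.toBlocks₂₂ := by
  ext (i | i) (j | j) <;> simp [mul_comm, toBlocks₁₁, toBlocks₂₂]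

theorem vonNeumannEntropy_labelKernel [DecidableEq n] :
    vonNeumannEntropy (of fun i j : n ⊕ n =>
      if i.isLeft = j.isLeft then (1 : ℝ) / (2 * Fintype.card n) else 0) = log 2 := by
  set P := of fun _ _ : n => (Fintype.card n : ℝ)⁻¹
  have hP : P.IsHermitian := by ext; rfl
  have hhalfP := hP.smul (IsSelfAdjoint.all (1 / 2 : ℝ))
  have hL : (of fun i j : n ⊕ n =>
      if i.isLeft = j.isLeft then (1 : ℝ) / (2 * Fintype.card n) else 0) =
      fromBlocks ((1 / 2 : ℝ) • P) 0 0 ((1 / 2 : ℝ) • P) := by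
    ext (i | i) (j | j) <;> simp [P] <;> ring
  rw [hL, vonNeumannEntropy_fromBlocks_zero hhalfP hhalfP, vonNeumannEntropy_smul hP,
    vonNeumannEntropy_eq_zero_of_isIdempotentElem hP isIdempotentElem_of_const_inv_card,
    trace_of_const_inv_card]
  simp [negMulLog, log_inv]
  ring

end LabelKernel

/-- The representation Jensen-Shannon divergence equals the matrix-based mutual information
between the mixture of the samples and the labels:
`S(K_Z) − (1/2)(S(K_X) + S(K_Y)) = S(K_Z) + S(K_L) − S((K_Z ⊙ K_L)/Tr(K_Z ⊙ K_L))`. -/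
theorem repJSD_eq_matrixMutualInformation {N : ℕ} (hN : 1 ≤ N)
    (K_Z : Matrix (Fin N ⊕ Fin N) (Fin N ⊕ Fin N) ℝ)
    (hK_Z : K_Z.PosSemidef) (hdiag : ∀ i, K_Z i i = 1 / (2 * N))
    (K_X K_Y : Matrix (Fin N) (Fin N) ℝ)
    (hK_X : K_X = (2 : ℝ) • K_Z.toBlocks₁₁) (hK_Y : K_Y = (2 : ℝ) • K_Z.toBlocks₂₂)
    (K_L : Matrix (Fin N ⊕ Fin N) (Fin N ⊕ Fin N) ℝ)
    (hK_L : K_L = Matrix.of fun i j =>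
      if (i.isLeft = j.isLeft) then (1 : ℝ) / (2 * N) else 0) :
    vonNeumannEntropy K_Z - (1 / 2) * (vonNeumannEntropy K_X + vonNeumannEntropy K_Y) =
      vonNeumannEntropy K_Z + vonNeumannEntropy K_L
        - vonNeumannEntropy ((1 / (K_Z ⊙ K_L).trace) • (K_Z ⊙ K_L)) := by
  have : NeZero N := ⟨by omega⟩
  set A := K_Z.toBlocks₁₁
  set B := K_Z.toBlocks₂₂
  obtain ⟨hA, -, -, hB⟩ := isHermitian_fromBlocks_iff.mp (K_Z.fromBlocks_toBlocks ▸ hK_Z.1)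
  have trA : A.trace = 1 / 2 := by simp [trace, A, toBlocks₁₁, hdiag]; field_simp
  have trB : B.trace = 1 / 2 := by simp [trace, B, toBlocks₂₂, hdiag]; field_simp
  have hSX : vonNeumannEntropy K_X = 2 * vonNeumannEntropy A + negMulLog 2 * (1 / 2) :=
    hK_X ▸ trA ▸ vonNeumannEntropy_smul hA 2
  have hSY : vonNeumannEntropy K_Y = 2 * vonNeumannEntropy B + negMulLog 2 * (1 / 2) :=
    hK_Y ▸ trB ▸ vonNeumannEntropy_smul hB 2
  have hZL : (1 / (K_Z ⊙ K_L).trace) • (K_Z ⊙ K_L) = fromBlocks A 0 0 B := by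
    have hc : 1 / (2 * N : ℝ) ≠ 0 := by positivity
    rw [hK_L, hadamard_ite_isLeft_eq, trace_smul, trace_fromBlocks, trA, trB, add_halves,
      smul_eq_mul, smul_smul, mul_one, one_div_mul_cancel hc, one_smul]
  have hSL : vonNeumannEntropy K_L = log 2 := by
    simpa [hK_L] using vonNeumannEntropy_labelKernel (n := Fin N)
  rw [hZL, vonNeumannEntropy_fromBlocks_zero hA hB, hSX, hSY, hSL]
  simp [negMulLog]
  ring
end

section
/- Let X be a measurable space, P and Q probability measures on X, and φ : X → ℝ^D a measurable map with ‖φ(x)‖ = 1 for all x. Let κ(x,y) = ⟨φ(x), φ(y)⟩. Then the squared Frobenius norm of the difference of the covariance matrices equals the squared maximum mean discrepancy with kernel κ²: ∑_{i,j} ((C_P)ᵢⱼ − (C_Q)ᵢⱼ)² = ∫∫ κ(x,x')² dP(x)dP(x') − 2·∫∫ κ(x,y)² dP(x)dQ(y) + ∫∫ κ(y,y')² dQ(y)dQ(y'). -/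
/-!
Expanding `κ(x,y)² = (∑ᵢ φᵢ(x) φᵢ(y))² = ∑ᵢⱼ (φᵢφⱼ)(x) (φᵢφⱼ)(y)` and integrating term by term
(the coordinates of `φ` are bounded) turns each double integral `∫∫ κ² dμ dν` into the Frobenius
inner product `∑ᵢⱼ (C_μ)ᵢⱼ (C_ν)ᵢⱼ`; the identity is then the expansion of `‖C_P - C_Q‖²_F`.
-/

open MeasureTheory Matrix
open scoped RealInnerProductSpace

/-- The uncentered covariance matrix of the feature map `φ` under the measure `P`:
`(C_P)ᵢⱼ = ∫ φ(x)ᵢ φ(x)ⱼ dP(x)`. -/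
noncomputable def covMatrix {X : Type*} [MeasurableSpace X] (P : Measure X) {D : ℕ}
    (φ : X → EuclideanSpace ℝ (Fin D)) : Matrix (Fin D) (Fin D) ℝ :=
  Matrix.of fun i j => ∫ x, φ x i * φ x j ∂P

lemma EuclideanSpace.inner_sq_eq_sum_sum {D : ℕ} (u v : EuclideanSpace ℝ (Fin D)) :
    ⟪u, v⟫ ^ 2 = ∑ i, ∑ j, (u i * u j) * (v i * v j) := by
  rw [PiLp.inner_apply, sq, Finset.sum_mul_sum]
  refine Finset.sum_congr rfl fun i _ => Finset.sum_congr rfl fun j _ => ?_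
  simp only [RCLike.inner_apply, conj_trivial]
  ring

section

variable {X : Type*} [MeasurableSpace X] {D : ℕ} {φ : X → EuclideanSpace ℝ (Fin D)}

lemma integrable_mul_apply_of_norm_le (μ : Measure X) [IsFiniteMeasure μ] (hφm : Measurable φ)
    {C : ℝ} (hφ : ∀ x, ‖φ x‖ ≤ C) (i j : Fin D) :
    Integrable (fun x => φ x i * φ x j) μ := by
  have hcoord (k : Fin D) : Measurable fun x => φ x k :=
    (measurable_pi_apply k).comp ((WithLp.measurable_ofLp _ _).comp hφm)
  refine Integrable.of_bound ((hcoord i).mul (hcoord j)).aestronglyMeasurable (C * C)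
    (Filter.Eventually.of_forall fun x => ?_)
  rw [norm_mul]
  exact mul_le_mul ((PiLp.norm_apply_le _ i).trans (hφ x)) ((PiLp.norm_apply_le _ j).trans (hφ x))
    (norm_nonneg _) ((norm_nonneg _).trans (hφ x))

theorem integral_integral_inner_sq_eq_sum_covMatrix_mul (μ ν : Measure X)
    (hμ : ∀ i j, Integrable (fun x => φ x i * φ x j) μ)
    (hν : ∀ i j, Integrable (fun x => φ x i * φ x j) ν) :
    ∫ x, ∫ y, ⟪φ x, φ y⟫ ^ 2 ∂ν ∂μ = ∑ i, ∑ j, covMatrix μ φ i j * covMatrix ν φ i j := by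
  have hinner (x : X) :
      ∫ y, ⟪φ x, φ y⟫ ^ 2 ∂ν = ∑ i, ∑ j, (φ x i * φ x j) * covMatrix ν φ i j := by
    simp_rw [EuclideanSpace.inner_sq_eq_sum_sum]
    rw [integral_finsetSum _ fun i _ => integrable_finsetSum _ fun j _ => (hν i j).const_mul _]
    refine Finset.sum_congr rfl fun i _ => ?_
    rw [integral_finsetSum _ fun j _ => (hν i j).const_mul _]
    exact Finset.sum_congr rfl fun j _ => integral_const_mul _ _
  simp_rw [hinner]
  rw [integral_finsetSum _ fun i _ => integrable_finsetSum _ fun j _ =>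
    (hμ i j).mul_const (covMatrix ν φ i j)]
  refine Finset.sum_congr rfl fun i _ => ?_
  rw [integral_finsetSum _ fun j _ => (hμ i j).mul_const (covMatrix ν φ i j)]
  exact Finset.sum_congr rfl fun j _ => integral_mul_const _ _

end

lemma Finset.sum_sum_sub_sq {ι : Type*} (s : Finset ι) (a b : ι → ι → ℝ) :
    ∑ i ∈ s, ∑ j ∈ s, (a i j - b i j) ^ 2 =
      ∑ i ∈ s, ∑ j ∈ s, a i j * a i j - 2 * ∑ i ∈ s, ∑ j ∈ s, a i j * b i j
        + ∑ i ∈ s, ∑ j ∈ s, b i j * b i j := by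
  simp only [Finset.mul_sum, ← Finset.sum_sub_distrib, ← Finset.sum_add_distrib]
  exact Finset.sum_congr rfl fun i _ => Finset.sum_congr rfl fun j _ => by ring

/-- The squared Frobenius norm of the difference of the covariance matrices equals the squared
maximum mean discrepancy with kernel `κ²`. -/
theorem frobenius_sq_covMatrix_eq_MMD_sq {X : Type*} [MeasurableSpace X]
    (P Q : Measure X) [IsProbabilityMeasure P] [IsProbabilityMeasure Q] {D : ℕ}
    (φ : X → EuclideanSpace ℝ (Fin D)) (hφm : Measurable φ) (hφ : ∀ x, ‖φ x‖ = 1)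
    (κ : X → X → ℝ) (hκ : ∀ x y, κ x y = ⟪φ x, φ y⟫) :
    ∑ i, ∑ j, (covMatrix P φ i j - covMatrix Q φ i j) ^ 2 =
      (∫ x, ∫ x', κ x x' ^ 2 ∂P ∂P) - 2 * (∫ x, ∫ y, κ x y ^ 2 ∂Q ∂P)
        + (∫ y, ∫ y', κ y y' ^ 2 ∂Q ∂Q) := by
  have hφ_le (x : X) : ‖φ x‖ ≤ 1 := (hφ x).le
  have hP := integrable_mul_apply_of_norm_le P hφm hφ_le
  have hQ := integrable_mul_apply_of_norm_le Q hφm hφ_le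
  simp_rw [hκ]
  rw [integral_integral_inner_sq_eq_sum_covMatrix_mul P P hP hP,
    integral_integral_inner_sq_eq_sum_covMatrix_mul P Q hP hQ,
    integral_integral_inner_sq_eq_sum_covMatrix_mul Q Q hQ hQ]
  exact Finset.sum_sum_sub_sq _ _ _
end

section
/- Let X be a measurable space, P and Q probability measures on X, and φ : X → ℝ^D a measurable map with ‖φ(x)‖ = 1 for all x. Let κ(x,y) = ⟨φ(x), φ(y)⟩, and let C_P, C_Q be the uncentered covariance matrices of P and Q under φ. Then S((C_P + C_Q)/2) − (1/2)(S(C_P) + S(C_Q)) ≥ (1/8)·( ∫∫ κ(x,x')² dP(x)dP(x') − 2·∫∫ κ(x,y)² dP(x)dQ(y) + ∫∫ κ(y,y')² dQ(y)dQ(y') ). In particular, the representation Jensen–Shannon divergence is strictly positive whenever the maximum mean discrepancy of P and Q with kernel κ² is nonzero. -/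
open MeasureTheory Matrix
open scoped RealInnerProductSpace

/-!
The function `g t = -t log t + t² / 2` is concave on `[0, 1]` (`g'' t = 1 - 1/t`), so by
Peierls' inequality `ρ ↦ Tr g(ρ) = S(ρ) + ‖ρ‖²_F / 2` is concave on density matrices. At the
midpoint of `C_P` and `C_Q` this bounds the Jensen gap of `S` below by
`(‖C_P‖²_F + ‖C_Q‖²_F) / 4 - ‖(C_P + C_Q) / 2‖²_F / 2 = ‖C_P - C_Q‖²_F / 8`, and
`∫∫ κ(x, y)² dP(x) dQ(y) = ⟪C_P, C_Q⟫_F` identifies `‖C_P - C_Q‖²_F` with the MMD term.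
-/

open Real in
theorem concaveOn_negMulLog_add_sq_div_two :
    ConcaveOn ℝ (Set.Icc 0 1) fun t => negMulLog t + t ^ 2 / 2 := by
  refine concaveOn_of_hasDerivWithinAt2_nonpos (f' := fun t => -log t - 1 + t)
    (f'' := fun t => -t⁻¹ + 1) (convex_Icc 0 1)
    (continuous_negMulLog.add (by fun_prop)).continuousOn (fun x hx => ?_) (fun x hx => ?_)
    (fun x hx => ?_) <;> rw [interior_Icc] at hx
  · exact ((hasDerivAt_negMulLog hx.1.ne').add
      (by simpa using (hasDerivAt_pow 2 x).div_const 2)).hasDerivWithinAt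
  · exact (((hasDerivAt_log hx.1.ne').neg.sub_const 1).add (hasDerivAt_id x)).hasDerivWithinAt
  · simpa using one_le_inv₀ hx.1 |>.mpr hx.2.le

namespace Matrix.IsHermitian

variable {n : Type*} [Fintype n] [DecidableEq n] {A : Matrix n n ℝ}

theorem toEuclideanLin_eigenvectorBasis (hA : A.IsHermitian) (j : n) :
    toEuclideanLin A (hA.eigenvectorBasis j) = hA.eigenvalues j • hA.eigenvectorBasis j := by
  ext k
  simpa [toLpLin_apply] using congrFun (hA.mulVec_eigenvectorBasis j) k

theorem inner_toEuclideanLin_self (hA : A.IsHermitian) (x : EuclideanSpace ℝ n) :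
    ⟪x, toEuclideanLin A x⟫ = ∑ j, hA.eigenvalues j * ⟪hA.eigenvectorBasis j, x⟫ ^ 2 := by
  conv_lhs => enter [3, 2]; rw [← hA.eigenvectorBasis.sum_repr' x]
  simp only [map_sum, map_smul, toEuclideanLin_eigenvectorBasis, inner_sum, real_inner_smul_right,
    real_inner_comm x]
  exact Finset.sum_congr rfl fun j _ => by ring

theorem inner_toEuclideanLin_self_mem {s : Set ℝ} (hs : Convex ℝ s) (hA : A.IsHermitian)
    (hA_s : ∀ j, hA.eigenvalues j ∈ s) {x : EuclideanSpace ℝ n} (hx : ‖x‖ = 1) :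
    ⟪x, toEuclideanLin A x⟫ ∈ s := by
  rw [inner_toEuclideanLin_self hA]
  simp_rw [mul_comm (hA.eigenvalues _)]
  exact hs.sum_mem (fun j _ => sq_nonneg _)
    (by rw [hA.eigenvectorBasis.sum_sq_inner_right, hx, one_pow]) fun j _ => hA_s j

/-- Peierls' inequality. -/
theorem sum_map_eigenvalues_le {f : ℝ → ℝ} {s : Set ℝ} (hf : ConcaveOn ℝ s f)
    (hA : A.IsHermitian) (hA_s : ∀ j, hA.eigenvalues j ∈ s)
    (v : OrthonormalBasis n ℝ (EuclideanSpace ℝ n)) :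
    ∑ j, f (hA.eigenvalues j) ≤ ∑ i, f ⟪v i, toEuclideanLin A (v i)⟫ := by
  set w : n → n → ℝ := fun i j => ⟪hA.eigenvectorBasis j, v i⟫ ^ 2
  have hw_row (i : n) : ∑ j, w i j = 1 := by
    simp [w, hA.eigenvectorBasis.sum_sq_inner_right, v.orthonormal.1 i]
  have hw_col (j : n) : ∑ i, w i j = 1 := by
    simp [w, v.sum_sq_inner_left, hA.eigenvectorBasis.orthonormal.1 j]
  calc ∑ j, f (hA.eigenvalues j)
      = ∑ i, ∑ j, w i j * f (hA.eigenvalues j) := by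
        rw [Finset.sum_comm]; simp [← Finset.sum_mul, hw_col]
    _ ≤ ∑ i, f (∑ j, w i j * hA.eigenvalues j) := Finset.sum_le_sum fun i _ =>
        hf.le_map_sum (fun j _ => sq_nonneg _) (hw_row i) fun j _ => hA_s j
    _ = ∑ i, f ⟪v i, toEuclideanLin A (v i)⟫ := by
        simp [inner_toEuclideanLin_self hA, w, mul_comm]

theorem inner_eigenvectorBasis_toEuclideanLin (hA : A.IsHermitian) (j : n) :
    ⟪hA.eigenvectorBasis j, toEuclideanLin A (hA.eigenvectorBasis j)⟫ = hA.eigenvalues j := by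
  rw [toEuclideanLin_eigenvectorBasis, real_inner_smul_right, real_inner_self_eq_norm_sq,
    hA.eigenvectorBasis.orthonormal.1 j, one_pow, mul_one]

theorem sum_map_eigenvalues_smul_add_le {B : Matrix n n ℝ} {f : ℝ → ℝ} {s : Set ℝ}
    (hf : ConcaveOn ℝ s f) (hA : A.IsHermitian) (hB : B.IsHermitian)
    (hA_s : ∀ j, hA.eigenvalues j ∈ s) (hB_s : ∀ j, hB.eigenvalues j ∈ s)
    {a b : ℝ} (ha : 0 ≤ a) (hb : 0 ≤ b) (hab : a + b = 1) (hM : (a • A + b • B).IsHermitian) :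
    a * ∑ j, f (hA.eigenvalues j) + b * ∑ j, f (hB.eigenvalues j) ≤
      ∑ j, f (hM.eigenvalues j) := by
  set v := hM.eigenvectorBasis
  have hv (i : n) : ‖v i‖ = 1 := v.orthonormal.1 i
  have hM_eq (i : n) : hM.eigenvalues i =
      a * ⟪v i, toEuclideanLin A (v i)⟫ + b * ⟪v i, toEuclideanLin B (v i)⟫ := by
    rw [← inner_eigenvectorBasis_toEuclideanLin hM]
    simp [inner_add_right, real_inner_smul_right, v]
  calc a * ∑ j, f (hA.eigenvalues j) + b * ∑ j, f (hB.eigenvalues j)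
      ≤ a * ∑ i, f ⟪v i, toEuclideanLin A (v i)⟫ + b * ∑ i, f ⟪v i, toEuclideanLin B (v i)⟫ := by
        gcongr ?_ * ?_ + ?_ * ?_
        exacts [sum_map_eigenvalues_le hf hA hA_s v, sum_map_eigenvalues_le hf hB hB_s v]
    _ ≤ ∑ i, f (hM.eigenvalues i) := by
        simp only [Finset.mul_sum, ← Finset.sum_add_distrib, hM_eq]
        exact Finset.sum_le_sum fun i _ => hf.2
          (inner_toEuclideanLin_self_mem hf.1 hA hA_s (hv i))
          (inner_toEuclideanLin_self_mem hf.1 hB hB_s (hv i)) ha hb hab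

theorem sum_sq_apply_eq_sum_eigenvalues_sq (hA : A.IsHermitian) :
    ∑ i, ∑ j, A i j ^ 2 = ∑ i, hA.eigenvalues i ^ 2 := by
  have h_frob : (A * A).trace = ∑ i, ∑ j, A i j ^ 2 := by
    simp only [trace, diag, mul_apply, sq]
    exact Finset.sum_congr rfl fun i _ => Finset.sum_congr rfl fun j _ => by
      rw [← hA.apply j i, star_trivial]
  rw [← h_frob]
  conv_lhs => rw [hA.spectral_theorem]
  rw [← map_mul, Unitary.conjStarAlgAut_apply, trace_mul_cycle, Unitary.coe_star_mul_self,
    Matrix.one_mul, diagonal_mul_diagonal, trace_diagonal]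
  simp [sq]

end Matrix.IsHermitian

theorem Matrix.PosSemidef.eigenvalues_mem_Icc_of_trace_eq_one {n : Type*} [Fintype n]
    [DecidableEq n] {A : Matrix n n ℝ} (hA : A.PosSemidef) (htr : A.trace = 1) (j : n) :
    hA.isHermitian.eigenvalues j ∈ Set.Icc 0 1 := by
  refine ⟨hA.eigenvalues_nonneg j, ?_⟩
  rw [← htr, hA.isHermitian.trace_eq_sum_eigenvalues]
  exact Finset.single_le_sum (fun i _ => hA.eigenvalues_nonneg i) (Finset.mem_univ j)

section Entropy

variable {n : Type*} [Fintype n] [DecidableEq n]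

open Real

theorem vonNeumannEntropy_eq_sum_negMulLog_s8 {A : Matrix n n ℝ} (hA : A.IsHermitian) :
    vonNeumannEntropy A = ∑ j, negMulLog (hA.eigenvalues j) := by
  rw [vonNeumannEntropy, dif_pos hA]
  simp [negMulLog]

theorem sum_negMulLog_add_sq_div_two_eigenvalues {A : Matrix n n ℝ} (hA : A.IsHermitian) :
    ∑ j, (negMulLog (hA.eigenvalues j) + hA.eigenvalues j ^ 2 / 2) =
      vonNeumannEntropy A + (∑ i, ∑ j, A i j ^ 2) / 2 := by
  rw [vonNeumannEntropy_eq_sum_negMulLog_s8 hA, hA.sum_sq_apply_eq_sum_eigenvalues_sq,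
    Finset.sum_add_distrib, Finset.sum_div]

theorem vonNeumannEntropy_midpoint_sub_ge {A B : Matrix n n ℝ} (hA : A.PosSemidef)
    (hB : B.PosSemidef) (htrA : A.trace = 1) (htrB : B.trace = 1) :
    vonNeumannEntropy ((1 / 2 : ℝ) • (A + B))
        - (1 / 2) * (vonNeumannEntropy A + vonNeumannEntropy B) ≥
      (1 / 8) * ∑ i, ∑ j, (A i j - B i j) ^ 2 := by
  rw [smul_add]
  set M := (1 / 2 : ℝ) • A + (1 / 2 : ℝ) • B
  have hM : M.IsHermitian :=
    (hA.isHermitian.smul (.all _)).add (hB.isHermitian.smul (.all _))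
  have key := hA.isHermitian.sum_map_eigenvalues_smul_add_le concaveOn_negMulLog_add_sq_div_two
    hB.isHermitian (hA.eigenvalues_mem_Icc_of_trace_eq_one htrA)
    (hB.eigenvalues_mem_Icc_of_trace_eq_one htrB) (by norm_num) (by norm_num) (by norm_num) hM
  simp only [sum_negMulLog_add_sq_div_two_eigenvalues] at key
  have h_sq (i j : n) : (A i j - B i j) ^ 2 = 2 * A i j ^ 2 + 2 * B i j ^ 2 - 4 * M i j ^ 2 := by
    simp only [M, Matrix.add_apply, Matrix.smul_apply, smul_eq_mul]; ring
  simp only [h_sq, Finset.sum_sub_distrib, Finset.sum_add_distrib, ← Finset.mul_sum]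
  linarith

end Entropy

section CovMatrix

variable {X : Type*} [MeasurableSpace X] {D : ℕ} {φ : X → EuclideanSpace ℝ (Fin D)}
  (μ : Measure X)

theorem covMatrix_isHermitian : (covMatrix μ φ).IsHermitian := by
  ext i j
  simp only [conjTranspose_apply, covMatrix, of_apply, star_trivial, mul_comm]

variable [IsFiniteMeasure μ] {C : ℝ}

theorem integrable_apply_mul_apply (hφm : Measurable φ) (hφ : ∀ x, ‖φ x‖ ≤ C) (i j : Fin D) :
    Integrable (fun x => φ x i * φ x j) μ := by
  refine Integrable.of_bound (by fun_prop) (C * C) (ae_of_all _ fun x => ?_)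
  have hi := (PiLp.norm_apply_le (φ x) i).trans (hφ x)
  rw [norm_mul]
  exact mul_le_mul hi ((PiLp.norm_apply_le (φ x) j).trans (hφ x)) (norm_nonneg _)
    ((norm_nonneg _).trans hi)

theorem integral_sum_sum_mul_apply_mul_apply (hφm : Measurable φ) (hφ : ∀ x, ‖φ x‖ ≤ C)
    (c : Fin D → Fin D → ℝ) :
    ∫ x, ∑ i, ∑ j, c i j * (φ x i * φ x j) ∂μ = ∑ i, ∑ j, c i j * covMatrix μ φ i j := by
  have hint := integrable_apply_mul_apply μ hφm hφ
  rw [integral_finsetSum _ fun i _ => integrable_finsetSum _ fun j _ => (hint i j).const_mul _]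
  refine Finset.sum_congr rfl fun i _ => ?_
  rw [integral_finsetSum _ fun j _ => (hint i j).const_mul _]
  simp only [integral_const_mul, covMatrix, of_apply]

theorem covMatrix_posSemidef (hφm : Measurable φ) (hφ : ∀ x, ‖φ x‖ ≤ C) :
    (covMatrix μ φ).PosSemidef := by
  refine .of_dotProduct_mulVec_nonneg (covMatrix_isHermitian μ) fun z => ?_
  have hsq (x : X) : (∑ i, z i * φ x i) ^ 2 = ∑ i, ∑ j, z i * z j * (φ x i * φ x j) := by
    rw [sq, Finset.sum_mul_sum]
    exact Finset.sum_congr rfl fun i _ => Finset.sum_congr rfl fun j _ => by ring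
  have hquad : star z ⬝ᵥ (covMatrix μ φ *ᵥ z) = ∫ x, (∑ i, z i * φ x i) ^ 2 ∂μ := by
    simp only [hsq, integral_sum_sum_mul_apply_mul_apply μ hφm hφ, dotProduct, mulVec,
      star_trivial, Finset.mul_sum]
    exact Finset.sum_congr rfl fun i _ => Finset.sum_congr rfl fun j _ => by ring
  exact hquad ▸ integral_nonneg fun x => sq_nonneg _

theorem trace_covMatrix (hφm : Measurable φ) (hφ : ∀ x, ‖φ x‖ ≤ C) :
    (covMatrix μ φ).trace = ∫ x, ‖φ x‖ ^ 2 ∂μ := by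
  simp_rw [EuclideanSpace.real_norm_sq_eq, sq]
  rw [integral_finsetSum _ fun i _ => integrable_apply_mul_apply μ hφm hφ i i]
  rfl

theorem integral_integral_inner_sq (ν : Measure X) [IsFiniteMeasure ν] (hφm : Measurable φ)
    (hφ : ∀ x, ‖φ x‖ ≤ C) :
    ∫ x, ∫ y, ⟪φ x, φ y⟫ ^ 2 ∂ν ∂μ = ∑ i, ∑ j, covMatrix μ φ i j * covMatrix ν φ i j := by
  have hsq (x y : X) :
      ⟪φ x, φ y⟫ ^ 2 = ∑ i, ∑ j, φ x i * φ x j * (φ y i * φ y j) := by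
    rw [PiLp.inner_apply, sq, Finset.sum_mul_sum]
    exact Finset.sum_congr rfl fun i _ => Finset.sum_congr rfl fun j _ => by simp only [RCLike.inner_apply, Real.ringHom_apply]; ring
  simp only [hsq, integral_sum_sum_mul_apply_mul_apply ν hφm hφ, mul_comm _ (covMatrix ν φ _ _)]
  simp only [integral_sum_sum_mul_apply_mul_apply μ hφm hφ (covMatrix ν φ), mul_comm]

end CovMatrix

/-- The representation Jensen-Shannon divergence is bounded below by one eighth of the
squared maximum mean discrepancy of `P` and `Q` with kernel `κ²`; in particular it is
strictly positive whenever this maximum mean discrepancy is nonzero. -/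
theorem repJSD_ge_MMD_sq {X : Type*} [MeasurableSpace X]
    (P Q : Measure X) [IsProbabilityMeasure P] [IsProbabilityMeasure Q] {D : ℕ}
    (φ : X → EuclideanSpace ℝ (Fin D)) (hφm : Measurable φ) (hφ : ∀ x, ‖φ x‖ = 1)
    (κ : X → X → ℝ) (hκ : ∀ x y, κ x y = ⟪φ x, φ y⟫) :
    (vonNeumannEntropy ((1 / 2 : ℝ) • (covMatrix P φ + covMatrix Q φ))
        - (1 / 2) * (vonNeumannEntropy (covMatrix P φ) + vonNeumannEntropy (covMatrix Q φ)) ≥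
      (1 / 8) * ((∫ x, ∫ x', κ x x' ^ 2 ∂P ∂P) - 2 * (∫ x, ∫ y, κ x y ^ 2 ∂Q ∂P)
          + (∫ y, ∫ y', κ y y' ^ 2 ∂Q ∂Q))) ∧
    (((∫ x, ∫ x', κ x x' ^ 2 ∂P ∂P) - 2 * (∫ x, ∫ y, κ x y ^ 2 ∂Q ∂P)
          + (∫ y, ∫ y', κ y y' ^ 2 ∂Q ∂Q)) ≠ 0 →
      0 < vonNeumannEntropy ((1 / 2 : ℝ) • (covMatrix P φ + covMatrix Q φ))
        - (1 / 2) * (vonNeumannEntropy (covMatrix P φ) + vonNeumannEntropy (covMatrix Q φ))) := by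
  have hφ_le (x : X) : ‖φ x‖ ≤ 1 := (hφ x).le
  have hκ_sq (μ ν : Measure X) [IsFiniteMeasure μ] [IsFiniteMeasure ν] :
      ∫ x, ∫ y, κ x y ^ 2 ∂ν ∂μ = ∑ i, ∑ j, covMatrix μ φ i j * covMatrix ν φ i j := by
    simp_rw [hκ]
    exact integral_integral_inner_sq μ ν hφm hφ_le
  have hMMD : (∫ x, ∫ x', κ x x' ^ 2 ∂P ∂P) - 2 * (∫ x, ∫ y, κ x y ^ 2 ∂Q ∂P)
      + (∫ y, ∫ y', κ y y' ^ 2 ∂Q ∂Q) = ∑ i, ∑ j, (covMatrix P φ i j - covMatrix Q φ i j) ^ 2 := by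
    simp only [hκ_sq, sub_sq, Finset.sum_add_distrib, Finset.sum_sub_distrib, Finset.mul_sum]
    ring_nf
  have htr (μ : Measure X) [IsProbabilityMeasure μ] : (covMatrix μ φ).trace = 1 := by
    simp [trace_covMatrix μ hφm hφ_le, hφ]
  have hgap := vonNeumannEntropy_midpoint_sub_ge (covMatrix_posSemidef P hφm hφ_le)
    (covMatrix_posSemidef Q hφm hφ_le) (htr P) (htr Q)
  rw [hMMD]
  refine ⟨hgap, fun hne => lt_of_lt_of_le ?_ hgap⟩
  exact mul_pos (by norm_num) (lt_of_le_of_ne (by positivity) (Ne.symm hne))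
end
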